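/- arXiv:2602.07601 — 3 statements merged into one kernel-verified Lean document; each statement's English description precedes it below -/
import Mathlib

section
/- Let X ~ CCP(n) with n ≥ 2. Then for all x ≥ 0, Pr[X ≤ n(ln n − x)] ≤ 2e^{-x}. -/
/-!
Let `t = ⌊n (ln n - x)⌋` and let `B j` be the event that coupon `j` is still missing after `t`
draws. Then `P(B j) = (1 - 1/n)^t` and, for `j ≠ k`, `P(B j ∩ B k) = (1 - 2/n)^t ≤ P(B j) P(B k)`,
so the number `W` of missing coupons has `Var W ≤ 𝔼 W`, and Chebyshev gives
`P(X ≤ t) ≤ P(W = 0) ≤ 1 / 𝔼 W` (up to the null event that some coupon never appears, on which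
`X = sInf ∅ = 0`). Finally `𝔼 W = n (1 - 1/n)^t ≥ n e^{-t/(n-1)} ≥ e^x / 2`, because
`ln n ≤ (n - 1) ln 2`.
-/

open MeasureTheory ProbabilityTheory

/-- The coupon collector time: the first time `t` such that every coupon in `Fin n`
has appeared among the draws `d 0, ..., d (t-1)`. -/
noncomputable def coverTime {Ω : Type} {n : ℕ} (d : ℕ → Ω → Fin n) (ω : Ω) : ℕ :=
  sInf {t | ∀ j : Fin n, ∃ s < t, d s ω = j}

open Finset Real

section SecondMoment

variable {Ω ι : Type*} [MeasurableSpace Ω] {μ : Measure Ω}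

lemma memLp_indicator_one [IsFiniteMeasure μ] {A : Set Ω} (hA : MeasurableSet A) (p : ENNReal) :
    MemLp (A.indicator (1 : Ω → ℝ)) p μ :=
  memLp_indicator_const p hA 1 (Or.inr (measure_ne_top μ A))

variable [IsProbabilityMeasure μ]

lemma covariance_indicator_one {A B : Set Ω} (hA : MeasurableSet A) (hB : MeasurableSet B) :
    cov[A.indicator 1, B.indicator 1; μ] = μ.real (A ∩ B) - μ.real A * μ.real B := by
  rw [covariance_eq_sub (memLp_indicator_one hA 2) (memLp_indicator_one hB 2),
    ← Set.inter_indicator_one, integral_indicator_one (hA.inter hB), integral_indicator_one hA,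
    integral_indicator_one hB]

lemma variance_sum_indicator_le [Fintype ι] {B : ι → Set Ω} (hB : ∀ i, MeasurableSet (B i))
    (hcorr : Pairwise fun i j => μ.real (B i ∩ B j) ≤ μ.real (B i) * μ.real (B j)) :
    Var[∑ i, (B i).indicator 1; μ] ≤ ∑ i, μ.real (B i) := by
  classical
  rw [variance_sum fun i => memLp_indicator_one (hB i) 2]
  gcongr with i
  have hoff : ∑ j ∈ univ.erase i, cov[(B i).indicator 1, (B j).indicator 1; μ] ≤ 0 :=
    sum_nonpos fun j hj => by
      rw [covariance_indicator_one (hB i) (hB j)]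
      linarith [hcorr (ne_of_mem_erase hj).symm]
  have hdiag : cov[(B i).indicator 1, (B i).indicator 1; μ] ≤ μ.real (B i) := by
    rw [covariance_indicator_one (hB i) (hB i), Set.inter_self]
    nlinarith [measureReal_nonneg (μ := μ) (s := B i)]
  rw [← add_sum_erase _ _ (mem_univ i)]
  linarith

theorem measureReal_forall_notMem_le_inv_sum [Fintype ι] {B : ι → Set Ω}
    (hB : ∀ i, MeasurableSet (B i))
    (hcorr : Pairwise fun i j => μ.real (B i ∩ B j) ≤ μ.real (B i) * μ.real (B j))
    (hpos : 0 < ∑ i, μ.real (B i)) :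
    μ.real {ω | ∀ i, ω ∉ B i} ≤ (∑ i, μ.real (B i))⁻¹ := by
  set W : Ω → ℝ := ∑ i, (B i).indicator 1
  set m := ∑ i, μ.real (B i)
  have hW : MemLp W 2 μ := memLp_finsetSum' _ fun i _ => memLp_indicator_one (hB i) 2
  have hmean : μ[W] = m := by
    simp only [W, Finset.sum_apply]
    rw [integral_finsetSum _ fun i _ => (memLp_indicator_one (hB i) 1).integrable le_rfl]
    exact sum_congr rfl fun i _ => integral_indicator_one (hB i)
  have hsub : {ω | ∀ i, ω ∉ B i} ⊆ {ω | m ≤ |W ω - μ[W]|} := fun ω hω => by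
    have hW0 : W ω = 0 := by simp [W, Set.indicator_of_notMem (hω _)]
    show m ≤ |W ω - μ[W]|
    rw [hW0, hmean, zero_sub, abs_neg, abs_of_pos hpos]
  calc μ.real {ω | ∀ i, ω ∉ B i} ≤ Var[W; μ] / m ^ 2 :=
        (measureReal_mono hsub).trans <| ENNReal.toReal_le_of_le_ofReal
          (div_nonneg (variance_nonneg W μ) (sq_nonneg m))
          (meas_ge_le_variance_div_sq hW hpos)
    _ ≤ m / m ^ 2 := by gcongr; exact variance_sum_indicator_le hB hcorr
    _ = m⁻¹ := by field_simp

end SecondMoment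

section Draws

variable {Ω : Type*} [MeasurableSpace Ω] {μ : Measure Ω} {n : ℕ} {d : ℕ → Ω → Fin n}

lemma measure_draw_mem (hmeas : ∀ t, Measurable (d t))
    (hunif : ∀ t j, μ {ω | d t ω = j} = (n : ENNReal)⁻¹) (s : ℕ) (E : Finset (Fin n)) :
    μ (d s ⁻¹' E) = #E * (n : ENNReal)⁻¹ := by
  rw [← sum_measure_preimage_singleton E fun j _ => hmeas s (measurableSet_singleton j)]
  simp [Set.preimage, hunif]

lemma measureReal_forall_lt_draw_mem (hmeas : ∀ t, Measurable (d t))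
    (hunif : ∀ t j, μ {ω | d t ω = j} = (n : ENNReal)⁻¹) (hindep : iIndepFun d μ)
    (E : Finset (Fin n)) (t : ℕ) :
    μ.real {ω | ∀ s < t, d s ω ∈ E} = ((#E : ℝ) / n) ^ t := by
  have hinter : {ω | ∀ s < t, d s ω ∈ E} = ⋂ s ∈ range t, d s ⁻¹' E := by ext; simp
  rw [measureReal_def, hinter, hindep.meas_biInter fun s _ => ⟨E, trivial, rfl⟩]
  simp only [measure_draw_mem hmeas hunif, prod_const, card_range, ENNReal.toReal_pow,
    ENNReal.toReal_mul, ENNReal.toReal_inv, ENNReal.toReal_natCast, div_eq_mul_inv]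

lemma measure_forall_draw_mem_eq_zero [IsFiniteMeasure μ] (hmeas : ∀ t, Measurable (d t))
    (hunif : ∀ t j, μ {ω | d t ω = j} = (n : ENNReal)⁻¹) (hindep : iIndepFun d μ)
    {E : Finset (Fin n)} (hE : #E < n) :
    μ {ω | ∀ s, d s ω ∈ E} = 0 := by
  have hq : (#E : ℝ) / n < 1 := (div_lt_one (by exact_mod_cast hE.pos)).2 (by exact_mod_cast hE)
  rw [← measureReal_eq_zero_iff]
  refine le_antisymm (ge_of_tendsto' (tendsto_pow_atTop_nhds_zero_of_lt_one (by positivity) hq)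
    fun t => ?_) measureReal_nonneg
  rw [← measureReal_forall_lt_draw_mem hmeas hunif hindep]
  exact measureReal_mono fun ω hω s _ => hω s

lemma ae_forall_exists_draw_eq [IsFiniteMeasure μ] (hmeas : ∀ t, Measurable (d t))
    (hunif : ∀ t j, μ {ω | d t ω = j} = (n : ENNReal)⁻¹) (hindep : iIndepFun d μ) :
    ∀ᵐ ω ∂μ, ∀ j, ∃ s, d s ω = j := by
  refine ae_all_iff.2 fun j => ?_
  rw [ae_iff]
  convert measure_forall_draw_mem_eq_zero hmeas hunif hindep (E := {j}ᶜ)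
    (by simp [card_compl, j.pos]) using 3
  simp

end Draws

lemma forall_exists_lt_of_coverTime_le {Ω : Type} {n : ℕ} {d : ℕ → Ω → Fin n} {ω : Ω} {t : ℕ}
    (hall : ∀ j, ∃ s, d s ω = j) (ht : coverTime d ω ≤ t) : ∀ j, ∃ s < t, d s ω = j := by
  have hne : {t | ∀ j : Fin n, ∃ s < t, d s ω = j}.Nonempty := by
    choose f hf using hall
    exact ⟨univ.sup f + 1, fun j => ⟨f j, Nat.lt_succ_of_le (le_sup (mem_univ j)), hf j⟩⟩
  intro j
  obtain ⟨s, hs, hsj⟩ := Nat.sInf_mem hne j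
  exact ⟨s, hs.trans_le ht, hsj⟩

theorem measureReal_coverTime_le_le_inv {Ω : Type} [MeasurableSpace Ω] {μ : Measure Ω}
    [IsProbabilityMeasure μ] {n : ℕ} (hn : 2 ≤ n) {d : ℕ → Ω → Fin n}
    (hmeas : ∀ t, Measurable (d t))
    (hunif : ∀ t j, μ {ω | d t ω = j} = (n : ENNReal)⁻¹) (hindep : iIndepFun d μ) (t : ℕ) :
    μ.real {ω | coverTime d ω ≤ t} ≤ (n * (((n : ℝ) - 1) / n) ^ t)⁻¹ := by
  classical
  have hn1 : (0 : ℝ) < n - 1 := by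
    rw [sub_pos]
    exact_mod_cast hn
  set B : Fin n → Set Ω := fun j => {ω | ∀ s < t, d s ω ∈ ({j}ᶜ : Finset (Fin n))}
  have hB_meas : ∀ j, MeasurableSet (B j) := fun _ => by measurability
  have hB : ∀ j, μ.real (B j) = (((n : ℝ) - 1) / n) ^ t := fun j => by
    rw [measureReal_forall_lt_draw_mem hmeas hunif hindep, card_compl, card_singleton,
      Fintype.card_fin, Nat.cast_sub (by omega), Nat.cast_one]
  have hcorr : Pairwise fun j k => μ.real (B j ∩ B k) ≤ μ.real (B j) * μ.real (B k) := by
    intro j k hjk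
    have hinter : B j ∩ B k = {ω | ∀ s < t, d s ω ∈ ({j, k}ᶜ : Finset (Fin n))} := by
      ext ω
      simp only [B, Set.mem_inter_iff, mem_compl, mem_insert, mem_singleton]
      grind
    rw [hinter, measureReal_forall_lt_draw_mem hmeas hunif hindep, hB, hB, ← mul_pow,
      card_compl, card_pair hjk, Fintype.card_fin]
    gcongr
    rw [div_mul_div_comm, div_le_div_iff₀ (by positivity) (by positivity), Nat.cast_sub hn,
      Nat.cast_ofNat]
    nlinarith [(n.cast_nonneg : (0 : ℝ) ≤ n)]
  have hcover : ∀ᵐ ω ∂μ, ω ∈ {ω | coverTime d ω ≤ t} → ω ∈ {ω | ∀ j, ω ∉ B j} := by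
    filter_upwards [ae_forall_exists_draw_eq hmeas hunif hindep] with ω hall hω j hj
    obtain ⟨s, hs, hsj⟩ := forall_exists_lt_of_coverTime_le hall hω j
    simpa [hsj] using hj s hs
  calc μ.real {ω | coverTime d ω ≤ t} ≤ μ.real {ω | ∀ j, ω ∉ B j} :=
        ENNReal.toReal_mono (measure_ne_top μ _) (measure_mono_ae hcover)
    _ ≤ (∑ j, μ.real (B j))⁻¹ :=
        measureReal_forall_notMem_le_inv_sum hB_meas hcorr (by
          simp only [hB, sum_const, card_univ, Fintype.card_fin, nsmul_eq_mul]
          positivity)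
    _ = (n * (((n : ℝ) - 1) / n) ^ t)⁻¹ := by simp [hB]

lemma exp_neg_inv_le_div_add_one {a : ℝ} (ha : 0 < a) : exp (-a⁻¹) ≤ a / (a + 1) := by
  rw [exp_neg]
  calc (exp a⁻¹)⁻¹ ≤ (a⁻¹ + 1)⁻¹ := inv_anti₀ (by positivity) (add_one_le_exp _)
    _ = a / (a + 1) := by field_simp; ring

lemma log_le_sub_one_mul_log_two {n : ℕ} (hn : 1 ≤ n) : log n ≤ (n - 1) * log 2 := by
  have hpow : n ≤ 2 ^ (n - 1) := by
    have := (n - 1).lt_two_pow_self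
    omega
  calc log n ≤ log (2 ^ (n - 1)) := log_le_log (by positivity) (by exact_mod_cast hpow)
    _ = (n - 1) * log 2 := by rw [log_pow, Nat.cast_sub hn, Nat.cast_one]

lemma exp_div_two_le_mul_pow {n : ℕ} (hn : 2 ≤ n) {x : ℝ} (hx : 0 ≤ x) {t : ℕ}
    (ht : (t : ℝ) ≤ n * (log n - x)) : exp x / 2 ≤ n * (((n : ℝ) - 1) / n) ^ t := by
  have hn' : (2 : ℝ) ≤ n := by exact_mod_cast hn
  have hn1 : (0 : ℝ) < n - 1 := by linarith
  have hpow : exp (-(t / (n - 1))) ≤ (((n : ℝ) - 1) / n) ^ t := by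
    calc exp (-(t / (n - 1))) = exp (-(n - 1 : ℝ)⁻¹) ^ t := by
          rw [← exp_nat_mul]; ring_nf
      _ ≤ (((n : ℝ) - 1) / n) ^ t := by
          gcongr
          simpa using exp_neg_inv_le_div_add_one hn1
  have hexponent : x - log 2 ≤ log n - t / (n - 1) := by
    have hlog := log_le_sub_one_mul_log_two (by omega : 1 ≤ n)
    have hdiv : n * (log n - x) / (n - 1) ≤ log n - x + log 2 := by
      rw [div_le_iff₀ hn1]
      linarith
    linarith [div_le_div_of_nonneg_right ht hn1.le]
  calc exp x / 2 = exp (x - log 2) := by rw [exp_sub, exp_log two_pos]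
    _ ≤ exp (log n - t / (n - 1)) := exp_le_exp.2 hexponent
    _ = n * exp (-(t / (n - 1))) := by
          rw [exp_sub, exp_neg, exp_log (by positivity), div_eq_mul_inv]
    _ ≤ n * (((n : ℝ) - 1) / n) ^ t := by gcongr

/-- For `X ~ CCP(n)` with `n ≥ 2` and all `x ≥ 0`,
`Pr[X ≤ n(ln n − x)] ≤ 2 e^{-x}`. -/
theorem ccp_left_tail {Ω : Type} [MeasurableSpace Ω] (μ : Measure Ω)
    [IsProbabilityMeasure μ] {n : ℕ} (hn : 2 ≤ n) (d : ℕ → Ω → Fin n)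
    (hmeas : ∀ t, Measurable (d t))
    (hunif : ∀ t j, μ {ω | d t ω = j} = (n : ENNReal)⁻¹)
    (hindep : iIndepFun d μ)
    {x : ℝ} (hx : 0 ≤ x) :
    (μ {ω | (coverTime d ω : ℝ) ≤ (n : ℝ) * (Real.log n - x)}).toReal
      ≤ 2 * Real.exp (-x) := by
  set r := (n : ℝ) * (log n - x)
  rcases lt_or_ge r 0 with hr | hr
  · have hempty : {ω | (coverTime d ω : ℝ) ≤ r} = ∅ :=
      Set.eq_empty_of_forall_notMem fun ω hω => (hr.trans_le (Nat.cast_nonneg _)).not_ge hω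
    rw [hempty, measure_empty, ENNReal.toReal_zero]
    positivity
  calc μ.real {ω | (coverTime d ω : ℝ) ≤ r} ≤ μ.real {ω | coverTime d ω ≤ ⌊r⌋₊} :=
        measureReal_mono fun ω hω => Nat.le_floor hω
    _ ≤ (n * (((n : ℝ) - 1) / n) ^ ⌊r⌋₊)⁻¹ :=
        measureReal_coverTime_le_le_inv hn hmeas hunif hindep ⌊r⌋₊
    _ ≤ (exp x / 2)⁻¹ :=
        inv_anti₀ (by positivity) (exp_div_two_le_mul_pow hn hx (Nat.floor_le hr))
    _ = 2 * exp (-x) := by rw [exp_neg]; field_simp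
end

section
/- Let X ~ CCP(n, ℓ) be the number of uniform draws from [n] needed to see every element at least ℓ times, with ℓ fixed. Then there exists a constant C_0 = C_0(ℓ) such that for all n ≥ 2 and all x ≥ 0, Pr[X > n(ln n + (ℓ−1) ln ln n + x)] ≤ C_0 e^{-x/2}. -/
open MeasureTheory ProbabilityTheory

/-- The `ℓ`-copies coupon collector time: the first time `t` such that every coupon in
`Fin n` has appeared at least `ℓ` times among the draws `d 0, ..., d (t-1)`. -/
noncomputable def coverTimeMul {Ω : Type} {n : ℕ} (ℓ : ℕ) (d : ℕ → Ω → Fin n) (ω : Ω) : ℕ :=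
  sInf {t | ∀ j : Fin n, ℓ ≤ ((Finset.range t).filter (fun s => d s ω = j)).card}

/-! If the collection is incomplete after `t = ⌊n L⌋` draws, where
`L = ln n + (ℓ - 1) ln ln n + x`, some coupon has been drawn fewer than `ℓ` times. By independence
this has probability `P[Bin(t, 1/n) < ℓ] ≤ ℓ e^(ℓ-1) (1 + t/n)^(ℓ-1) e^(-t/n)`, so a union bound
over the `n` coupons costs the factor `n`. Since `t/n ≈ L`, the product `n e^(-t/n)` is about
`e^(-x) / (ln n)^(ℓ-1)`, which cancels the polynomial factor `(1 + t/n)^(ℓ-1)` up to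
`(ℓ + 2 + 2x)^(ℓ-1)`, and that is absorbed by `e^(x/2)`. -/

open Finset Real
open scoped Nat

lemma pow_le_factorial_mul_pow_mul_exp {c y : ℝ} (hc : 0 < c) (hy : 0 ≤ y) (m : ℕ) :
    y ^ m ≤ m ! * c ^ m * exp (y / c) := by
  have h := Real.pow_div_factorial_le_exp _ (div_nonneg hy hc.le) m
  rw [div_pow, div_div, div_le_iff₀ (by positivity)] at h
  linarith

section Binomial

variable {p : ℝ}

lemma choose_mul_pow_mul_one_sub_pow_le (hp0 : 0 ≤ p) (hp1 : p ≤ 1) (t k : ℕ) :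
    t.choose k * p ^ k * (1 - p) ^ (t - k) ≤ (t * p) ^ k * exp (k - t * p) := by
  have hchoose : (t.choose k : ℝ) * p ^ k ≤ (t * p) ^ k :=
    calc (t.choose k : ℝ) * p ^ k ≤ t ^ k / k ! * p ^ k := by
          gcongr; exact Nat.choose_le_pow_div k t
      _ ≤ t ^ k * p ^ k := by
          gcongr; exact div_le_self (by positivity) (by exact_mod_cast k.factorial_pos)
      _ = (t * p) ^ k := (mul_pow _ _ _).symm
  have htk : (t : ℝ) ≤ (t - k : ℕ) + k := by exact_mod_cast le_tsub_add
  have hq : (1 - p) ^ (t - k) ≤ exp (k - t * p) :=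
    calc (1 - p) ^ (t - k) ≤ exp (-p) ^ (t - k) := by
          gcongr; linarith [add_one_le_exp (-p)]
      _ = exp (-(p * (t - k : ℕ))) := by rw [← exp_nat_mul]; ring_nf
      _ ≤ exp (k - t * p) := by gcongr; nlinarith
  exact mul_le_mul hchoose hq (by positivity) (by positivity)

lemma sum_range_choose_mul_pow_mul_one_sub_pow_le (hp0 : 0 ≤ p) (hp1 : p ≤ 1) (t m : ℕ) :
    ∑ k ∈ range (m + 1), t.choose k * p ^ k * (1 - p) ^ (t - k)
      ≤ (m + 1) * exp m * ((1 + t * p) ^ m * exp (-(t * p))) := by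
  have htp : 0 ≤ (t : ℝ) * p := by positivity
  calc ∑ k ∈ range (m + 1), t.choose k * p ^ k * (1 - p) ^ (t - k)
      ≤ ∑ _k ∈ range (m + 1), (1 + t * p) ^ m * exp (m - t * p) := by
        refine sum_le_sum fun k hk => ?_
        have hkm : k ≤ m := Nat.lt_succ_iff.mp (mem_range.mp hk)
        calc _ ≤ (t * p) ^ k * exp (k - t * p) := choose_mul_pow_mul_one_sub_pow_le hp0 hp1 t k
          _ ≤ (1 + t * p) ^ k * exp (m - t * p) := by gcongr; linarith
          _ ≤ (1 + t * p) ^ m * exp (m - t * p) := by gcongr; linarith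
    _ = (m + 1) * exp m * ((1 + t * p) ^ m * exp (-(t * p))) := by
        rw [sum_const, card_range, nsmul_eq_mul, sub_eq_add_neg, exp_add]; push_cast; ring

end Binomial

lemma mul_one_add_pow_mul_exp_neg_le {N x u : ℝ} (hN : 2 ≤ N) (hx : 0 ≤ x) (m : ℕ) (hu0 : 0 ≤ u)
    (hu_lo : log N + m * log (log N) + x - 1 ≤ u) (hu_hi : u ≤ (m + 1) * log N + x) :
    N * ((1 + u) ^ m * exp (-u)) ≤ m ! * 4 ^ m * exp ((m + 7) / 4) * exp (-x / 2) := by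
  have hlogN : 1 / 2 < log N :=
    (by linarith [log_two_gt_d9] : (1 / 2 : ℝ) < log 2).trans_le (log_le_log (by norm_num) hN)
  have hdecay : N * exp (-u) ≤ exp (1 - x) / log N ^ m := by
    have hpow : exp (log N + m * log (log N)) = N * log N ^ m := by
      rw [exp_add, exp_nat_mul, exp_log (by linarith), exp_log (by linarith)]
    have h : exp (-u) * (N * log N ^ m) ≤ exp (1 - x) := by
      rw [← hpow, ← exp_add]
      gcongr
      linarith
    rw [le_div_iff₀ (by positivity)]
    linarith
  have hgrowth : 1 + u ≤ (m + 3 + 2 * x) * log N := by nlinarith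
  calc N * ((1 + u) ^ m * exp (-u)) = (1 + u) ^ m * (N * exp (-u)) := by ring
    _ ≤ ((m + 3 + 2 * x) * log N) ^ m * (exp (1 - x) / log N ^ m) := by gcongr
    _ = (m + 3 + 2 * x) ^ m * exp (1 - x) := by
        rw [mul_pow]; field_simp
    _ ≤ m ! * 4 ^ m * exp ((m + 3 + 2 * x) / 4) * exp (1 - x) := by
        gcongr; exact pow_le_factorial_mul_pow_mul_exp (by norm_num) (by positivity) m
    _ = m ! * 4 ^ m * exp ((m + 7) / 4) * exp (-x / 2) := by
        rw [mul_assoc _ (exp _), ← exp_add, mul_assoc _ (exp _), ← exp_add]; ring_nf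

lemma sub_one_le_floor_mul_div {N : ℝ} (hN : 1 ≤ N) (L : ℝ) : L - 1 ≤ ⌊N * L⌋₊ / N := by
  rw [le_div_iff₀ (by linarith)]
  nlinarith [Nat.sub_one_lt_floor (N * L)]

lemma floor_mul_div_le_max {N : ℝ} (hN : 0 < N) (L : ℝ) : (⌊N * L⌋₊ : ℝ) / N ≤ max L 0 := by
  rcases le_total 0 L with hL | hL
  · rw [max_eq_left hL, div_le_iff₀ hN, mul_comm]
    exact Nat.floor_le (by positivity)
  · rw [Nat.floor_of_nonpos (mul_nonpos_of_nonneg_of_nonpos hN.le hL)]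
    simp

section CouponCounts

variable {Ω α : Type*} [MeasurableSpace Ω] [MeasurableSpace α] [MeasurableSingletonClass α]
  [DecidableEq α] {μ : Measure Ω} [IsProbabilityMeasure μ] {d : ℕ → Ω → α}

lemma measureReal_setOf_filter_eq {j : α} {p : ℝ} (hd : ∀ s, Measurable (d s))
    (hind : iIndepFun d μ) (hj : ∀ s, μ.real (d s ⁻¹' {j}) = p) {t : ℕ} {S : Finset ℕ}
    (hS : S ⊆ range t) :
    μ.real {ω | (range t).filter (fun s => d s ω = j) = S} = p ^ #S * (1 - p) ^ (t - #S) := by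
  let A : ℕ → Set α := fun s => if s ∈ S then {j} else {j}ᶜ
  have hA : ∀ s, MeasurableSet (A s) := fun s => by
    by_cases hs : s ∈ S <;> simp [A, hs]
  have hset : {ω | (range t).filter (fun s => d s ω = j) = S} = ⋂ s ∈ range t, d s ⁻¹' A s := by
    ext ω
    simp only [Set.mem_ofPred_eq, Set.mem_iInter, Set.mem_preimage, Finset.ext_iff, mem_filter]
    constructor
    · intro h s hs
      by_cases hsS : s ∈ S
      · simpa [A, hsS] using ((h s).2 hsS).2
      · simpa [A, hsS] using fun h' => hsS ((h s).1 ⟨hs, h'⟩)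
    · intro h s
      by_cases hs : s ∈ range t
      · by_cases hsS : s ∈ S <;> simpa [A, hsS, hs] using h s hs
      · exact iff_of_false (fun h' => hs h'.1) (fun h' => hs (hS h'))
  have hcompl : ∀ s, μ.real (d s ⁻¹' {j}ᶜ) = 1 - p := fun s => by
    rw [Set.preimage_compl, measureReal_compl (hd s (measurableSet_singleton j)), probReal_univ,
      hj]
  rw [hset, measureReal_def, hind.measure_inter_preimage_eq_mul _ fun s _ => hA s,
    ENNReal.toReal_prod, ← prod_sdiff hS, mul_comm]
  simp_rw [← measureReal_def]
  rw [prod_eq_pow_card (b := p) fun s hs => by simp only [A, if_pos hs, hj],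
    prod_eq_pow_card (b := 1 - p) fun s hs => by simp only [A, if_neg (mem_sdiff.1 hs).2, hcompl],
    card_sdiff_of_subset hS, card_range]

lemma measureReal_setOf_card_filter_lt_le {j : α} {p : ℝ} (hd : ∀ s, Measurable (d s))
    (hind : iIndepFun d μ) (hj : ∀ s, μ.real (d s ⁻¹' {j}) = p) (t ℓ : ℕ) :
    μ.real {ω | #((range t).filter (fun s => d s ω = j)) < ℓ}
      ≤ ∑ k ∈ range ℓ, t.choose k * p ^ k * (1 - p) ^ (t - k) := by
  have hcover : {ω | #((range t).filter (fun s => d s ω = j)) < ℓ} ⊆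
      ⋃ k ∈ range ℓ, ⋃ S ∈ powersetCard k (range t),
        {ω | (range t).filter (fun s => d s ω = j) = S} := fun ω hω =>
    Set.mem_iUnion₂.2 ⟨_, mem_range.2 hω,
      Set.mem_iUnion₂.2 ⟨_, mem_powersetCard.2 ⟨filter_subset _ _, rfl⟩, rfl⟩⟩
  calc μ.real {ω | #((range t).filter (fun s => d s ω = j)) < ℓ}
      ≤ ∑ k ∈ range ℓ, ∑ S ∈ powersetCard k (range t),
          μ.real {ω | (range t).filter (fun s => d s ω = j) = S} :=
        (measureReal_mono hcover (measure_ne_top _ _)).trans <|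
          (measureReal_biUnion_finset_le _ _).trans <|
            sum_le_sum fun k _ => measureReal_biUnion_finset_le _ _
    _ = ∑ k ∈ range ℓ, t.choose k * p ^ k * (1 - p) ^ (t - k) := by
        refine sum_congr rfl fun k _ => ?_
        rw [sum_congr rfl fun S hS => by
            rw [measureReal_setOf_filter_eq hd hind hj (mem_powersetCard.1 hS).1,
              (mem_powersetCard.1 hS).2],
          sum_const, card_powersetCard, card_range, nsmul_eq_mul, mul_assoc]

end CouponCounts

section CoverTime

variable {Ω : Type} {n ℓ : ℕ}

lemma exists_card_filter_lt_of_lt_coverTimeMul [NeZero n] (hℓ : 1 ≤ ℓ) {d : ℕ → Ω → Fin n}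
    {ω : Ω} {T : ℝ} (hT : T < coverTimeMul ℓ d ω) :
    ∃ j, #((range ⌊T⌋₊).filter (fun s => d s ω = j)) < ℓ := by
  by_contra! h
  rcases le_or_gt 0 T with hT0 | hT0
  · have hle : coverTimeMul ℓ d ω ≤ ⌊T⌋₊ := Nat.sInf_le h
    have : (coverTimeMul ℓ d ω : ℝ) ≤ ⌊T⌋₊ := by exact_mod_cast hle
    linarith [Nat.floor_le hT0]
  · have := h 0
    rw [Nat.floor_of_nonpos hT0.le] at this
    simp only [range_zero, filter_empty, card_empty] at this
    omega

lemma measureReal_setOf_lt_coverTimeMul_le [MeasurableSpace Ω] {μ : Measure Ω}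
    [IsProbabilityMeasure μ] [NeZero n] (hℓ : 1 ≤ ℓ) {d : ℕ → Ω → Fin n}
    (hd : ∀ s, Measurable (d s)) (hunif : ∀ s j, μ {ω | d s ω = j} = (n : ENNReal)⁻¹)
    (hind : iIndepFun d μ) (T : ℝ) :
    μ.real {ω | T < coverTimeMul ℓ d ω}
      ≤ n * ∑ k ∈ range ℓ, ⌊T⌋₊.choose k * (n : ℝ)⁻¹ ^ k * (1 - (n : ℝ)⁻¹) ^ (⌊T⌋₊ - k) := by
  have hunif' : ∀ s j, μ.real (d s ⁻¹' {j}) = (n : ℝ)⁻¹ := fun s j => by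
    rw [measureReal_def, show d s ⁻¹' {j} = {ω | d s ω = j} from rfl, hunif, ENNReal.toReal_inv,
      ENNReal.toReal_natCast]
  calc μ.real {ω | T < coverTimeMul ℓ d ω}
      ≤ μ.real (⋃ j, {ω | #((range ⌊T⌋₊).filter (fun s => d s ω = j)) < ℓ}) :=
        measureReal_mono fun ω hω =>
          Set.mem_iUnion.2 (exists_card_filter_lt_of_lt_coverTimeMul hℓ hω)
    _ ≤ ∑ _j : Fin n, ∑ k ∈ range ℓ,
          ⌊T⌋₊.choose k * (n : ℝ)⁻¹ ^ k * (1 - (n : ℝ)⁻¹) ^ (⌊T⌋₊ - k) :=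
        (measureReal_iUnion_fintype_le _).trans <|
          sum_le_sum fun j _ => measureReal_setOf_card_filter_lt_le hd hind (hunif' · j) _ _
    _ = _ := by rw [sum_const, card_univ, Fintype.card_fin, nsmul_eq_mul]

end CoverTime

/-- For `X ~ CCP(n, ℓ)` with `ℓ` fixed, there is `C₀ = C₀(ℓ)` such that for
all `n ≥ 2` and `x ≥ 0`, `Pr[X > n(ln n + (ℓ−1) ln ln n + x)] ≤ C₀ e^{-x/2}`. -/
theorem ccp_multi_right_tail (ℓ : ℕ) (hℓ : 1 ≤ ℓ) :
    ∃ C₀ : ℝ, 0 < C₀ ∧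
      ∀ (n : ℕ), 2 ≤ n →
      ∀ (Ω : Type) (_ : MeasurableSpace Ω) (μ : Measure Ω), IsProbabilityMeasure μ →
      ∀ (d : ℕ → Ω → Fin n), (∀ t, Measurable (d t)) →
        (∀ t j, μ {ω | d t ω = j} = (n : ENNReal)⁻¹) →
        iIndepFun d μ →
        ∀ x : ℝ, 0 ≤ x →
          (μ {ω | (n : ℝ) * (Real.log n + (ℓ - 1) * Real.log (Real.log n) + x)
              < (coverTimeMul ℓ d ω : ℝ)}).toReal ≤ C₀ * Real.exp (-x / 2) := by
  obtain ⟨m, rfl⟩ : ∃ m, ℓ = m + 1 := ⟨ℓ - 1, by omega⟩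
  refine ⟨(m + 1) * exp m * (m ! * 4 ^ m * exp ((m + 7) / 4)), by positivity, ?_⟩
  intro n hn Ω _ μ _ d hd hunif hind x hx
  have : NeZero n := ⟨by omega⟩
  have hn2 : (2 : ℝ) ≤ n := by exact_mod_cast hn
  set L := log n + m * log (log n) + x with hL
  set t := ⌊n * L⌋₊
  have hu_lo : L - 1 ≤ t * (n : ℝ)⁻¹ :=
    div_eq_mul_inv (t : ℝ) n ▸ sub_one_le_floor_mul_div (by linarith) L
  have hu_hi : t * (n : ℝ)⁻¹ ≤ (m + 1) * log n + x := by
    have hlog : 0 ≤ log n := log_nonneg (by linarith)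
    rw [← div_eq_mul_inv]
    refine (floor_mul_div_le_max (by positivity) L).trans (max_le ?_ (by positivity))
    nlinarith [log_le_self hlog]
  have hT : (n : ℝ) * (log n + ((m + 1 : ℕ) - 1) * log (log n) + x) = n * L := by
    push_cast; ring
  rw [hT, ← measureReal_def]
  calc μ.real {ω | n * L < (coverTimeMul (m + 1) d ω : ℝ)}
      ≤ n * ∑ k ∈ range (m + 1), t.choose k * (n : ℝ)⁻¹ ^ k * (1 - (n : ℝ)⁻¹) ^ (t - k) :=
        measureReal_setOf_lt_coverTimeMul_le (by omega) hd hunif hind _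
    _ ≤ n * ((m + 1) * exp m * ((1 + t * (n : ℝ)⁻¹) ^ m * exp (-(t * (n : ℝ)⁻¹)))) :=
        mul_le_mul_of_nonneg_left (sum_range_choose_mul_pow_mul_one_sub_pow_le (by positivity)
          (inv_le_one_of_one_le₀ (by linarith)) t m) (by positivity)
    _ = (m + 1) * exp m * (n * ((1 + t * (n : ℝ)⁻¹) ^ m * exp (-(t * (n : ℝ)⁻¹)))) := by ring
    _ ≤ (m + 1) * exp m * (m ! * 4 ^ m * exp ((m + 7) / 4) * exp (-x / 2)) :=
        mul_le_mul_of_nonneg_left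
          (mul_one_add_pow_mul_exp_neg_le hn2 hx m (by positivity) hu_lo hu_hi) (by positivity)
    _ = _ := by ring
end

section
/- In the balls-into-bins model where t balls are thrown independently and uniformly at random into n bins, and B_i denotes the number of balls in bin i, the random variables B_1,...,B_n are negatively associated. -/
open MeasureTheory ProbabilityTheory

/-!
Induct on the number of balls. Throwing one more ball into a uniform bin `k`, independent of
the others, turns the count vector `B` into `B + e_k`. For fixed `k` the shifted functions
`f (· + e_k)`, `g (· + e_k)` still depend on `I` resp. `J` and are still monotone, so the
induction hypothesis bounds the conditional covariance. It remains to average over `k`: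
`F k = 𝔼 f (B + e_k)` and `G k = 𝔼 g (B + e_k)` lie above `𝔼 f (B)` and `𝔼 g (B)`, and
since `I` and `J` are disjoint, for each `k` at most one of them differs from its baseline.
This makes `F` and `G` negatively correlated as functions of the uniform `k`.
The antitone case follows by negating `f` and `g`.
-/

/-- In the balls-into-bins model, `binCount balls ω i` is the number of balls
landing in bin `i`. -/
noncomputable def binCount {Ω : Type} {n t : ℕ} (balls : Fin t → Ω → Fin n)
    (ω : Ω) (i : Fin n) : ℝ :=
  ((Finset.univ.filter (fun s => balls s ω = i)).card : ℝ)

open Finset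

/-- The count vector of a deterministic configuration; `binCount balls ω` is definitionally
`countVector fun s => balls s ω`. -/
noncomputable def countVector {n t : ℕ} (b : Fin t → Fin n) (i : Fin n) : ℝ := #{s | b s = i}

lemma countVector_cons {n t : ℕ} (k : Fin n) (b : Fin t → Fin n) :
    countVector (Fin.cons k b : Fin (t + 1) → Fin n) = countVector b + Pi.single k 1 := by
  funext i
  rw [Pi.add_apply, countVector, countVector, card_filter, card_filter, Fin.sum_univ_succ]
  simp [Pi.single_apply, eq_comm, add_comm]

lemma sum_countVector_succ {n t : ℕ} {M : Type*} [AddCommMonoid M] (φ : (Fin n → ℝ) → M) :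
    ∑ b : Fin (t + 1) → Fin n, φ (countVector b)
      = ∑ k : Fin n, ∑ b : Fin t → Fin n, φ (countVector b + Pi.single k 1) := by
  rw [← (Fin.consEquiv fun _ => Fin n).sum_comp, Fintype.sum_prod_type]
  exact sum_congr rfl fun k _ => sum_congr rfl fun b _ => congrArg φ (countVector_cons k b)

lemma card_mul_sum_mul_le_sum_mul_sum {ι : Type*} [Fintype ι] {F G : ι → ℝ} {x y : ℝ}
    (hF : ∀ k, x ≤ F k) (hG : ∀ k, y ≤ G k) (hFG : ∀ k, F k = x ∨ G k = y) :
    Fintype.card ι * ∑ k, F k * G k ≤ (∑ k, F k) * ∑ k, G k := by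
  have hprod : ∀ k, F k * G k = x * G k + y * F k - x * y := fun k => by
    rcases hFG k with h | h <;> rw [h] <;> ring
  have hxF := card_nsmul_le_sum univ F x fun k _ => hF k
  have hyG := card_nsmul_le_sum univ G y fun k _ => hG k
  rw [card_univ, nsmul_eq_mul] at hxF hyG
  simp only [hprod, sum_sub_distrib, sum_add_distrib, ← mul_sum, sum_const, card_univ,
    nsmul_eq_mul]
  nlinarith [mul_nonneg (sub_nonneg.2 hxF) (sub_nonneg.2 hyG)]

lemma DependsOn.comp_add_right {ι β M : Type*} [Add M] {f : (ι → M) → β} {s : Set ι}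
    (hf : DependsOn f s) (w : ι → M) : DependsOn (fun v => f (v + w)) s :=
  fun _ _ h => hf fun i hi => by simp [h i hi]

lemma DependsOn.apply_add_single {ι β M : Type*} [DecidableEq ι] [AddZeroClass M]
    {f : (ι → M) → β} {s : Set ι} (hf : DependsOn f s) {k : ι} (hk : k ∉ s)
    (v : ι → M) (m : M) :
    f (v + Pi.single k m) = f v :=
  hf fun i hi => by simp [ne_of_mem_of_not_mem hi hk]

theorem pow_mul_sum_countVector_mul_le_of_monotone {n : ℕ} {I J : Set (Fin n)}
    (hIJ : Disjoint I J) (t : ℕ) {f g : (Fin n → ℝ) → ℝ} (hfI : DependsOn f I)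
    (hgJ : DependsOn g J) (hf : Monotone f) (hg : Monotone g) :
    (n : ℝ) ^ t * ∑ b : Fin t → Fin n, f (countVector b) * g (countVector b)
      ≤ (∑ b : Fin t → Fin n, f (countVector b)) *
          ∑ b : Fin t → Fin n, g (countVector b) := by
  induction t generalizing f g with
  | zero => simp
  | succ t ih =>
    have monotone_shift {φ : (Fin n → ℝ) → ℝ} (hφ : Monotone φ) (k : Fin n) :
        Monotone fun v => φ (v + Pi.single k 1) :=
      fun _ _ h => hφ (by gcongr)
    have sum_le_sum_shift {φ : (Fin n → ℝ) → ℝ} (hφ : Monotone φ) (k : Fin n) :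
        ∑ b : Fin t → Fin n, φ (countVector b)
          ≤ ∑ b : Fin t → Fin n, φ (countVector b + Pi.single k 1) :=
      sum_le_sum fun b _ => hφ (le_add_of_nonneg_right (Pi.single_nonneg.2 zero_le_one))
    have shift_eq (k : Fin n) :
        ∑ b : Fin t → Fin n, f (countVector b + Pi.single k 1)
            = ∑ b : Fin t → Fin n, f (countVector b) ∨
          ∑ b : Fin t → Fin n, g (countVector b + Pi.single k 1)
            = ∑ b : Fin t → Fin n, g (countVector b) := by
      have hk : k ∉ I ∨ k ∉ J := not_and_or.1 fun hk => hIJ.notMem_of_mem_left hk.1 hk.2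
      refine hk.imp ?_ ?_
      · exact fun hk => sum_congr rfl fun b _ => hfI.apply_add_single hk _ _
      · exact fun hk => sum_congr rfl fun b _ => hgJ.apply_add_single hk _ _
    rw [sum_countVector_succ fun v => f v * g v, sum_countVector_succ f, sum_countVector_succ g]
    calc (n : ℝ) ^ (t + 1) * ∑ k, ∑ b : Fin t → Fin n,
            f (countVector b + Pi.single k 1) * g (countVector b + Pi.single k 1)
        = n * ∑ k, (n : ℝ) ^ t * ∑ b : Fin t → Fin n,
            f (countVector b + Pi.single k 1) * g (countVector b + Pi.single k 1) := by
          rw [pow_succ', mul_assoc, mul_sum]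
      _ ≤ n * ∑ k, (∑ b : Fin t → Fin n, f (countVector b + Pi.single k 1)) *
            ∑ b : Fin t → Fin n, g (countVector b + Pi.single k 1) := by
          gcongr n * ∑ k, ?_ with k
          exact ih (hfI.comp_add_right _) (hgJ.comp_add_right _)
            (monotone_shift hf k) (monotone_shift hg k)
      _ ≤ _ := by
          simpa using card_mul_sum_mul_le_sum_mul_sum
            (sum_le_sum_shift hf) (sum_le_sum_shift hg) shift_eq

theorem pow_mul_sum_countVector_mul_le {n : ℕ} {I J : Set (Fin n)} (hIJ : Disjoint I J) (t : ℕ)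
    {f g : (Fin n → ℝ) → ℝ} (hfI : DependsOn f I) (hgJ : DependsOn g J)
    (hmono : (Monotone f ∧ Monotone g) ∨ (Antitone f ∧ Antitone g)) :
    (n : ℝ) ^ t * ∑ b : Fin t → Fin n, f (countVector b) * g (countVector b)
      ≤ (∑ b : Fin t → Fin n, f (countVector b)) *
          ∑ b : Fin t → Fin n, g (countVector b) := by
  rcases hmono with ⟨hf, hg⟩ | ⟨hf, hg⟩
  · exact pow_mul_sum_countVector_mul_le_of_monotone hIJ t hfI hgJ hf hg
  · have h := pow_mul_sum_countVector_mul_le_of_monotone hIJ t (f := -f) (g := -g)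
      (fun _ _ h => by simp [hfI h]) (fun _ _ h => by simp [hgJ h]) hf.neg hg.neg
    simpa only [Pi.neg_apply, neg_mul_neg, sum_neg_distrib] using h

lemma ProbabilityTheory.iIndepFun.measure_preimage_singleton_pi {ι Ω β : Type*} [Fintype ι]
    [MeasurableSpace Ω] [MeasurableSpace β] [MeasurableSingletonClass β] {μ : Measure Ω}
    {X : ι → Ω → β} (hX : iIndepFun X μ) (b : ι → β) :
    μ ((fun ω s => X s ω) ⁻¹' {b}) = ∏ s, μ (X s ⁻¹' {b s}) := by
  have h : (fun ω s => X s ω) ⁻¹' {b} = ⋂ s, X s ⁻¹' {b s} := by ext; simp [funext_iff]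
  rw [h, hX.meas_iInter fun s => ⟨{b s}, measurableSet_singleton _, rfl⟩]

lemma integral_comp_of_measure_preimage_singleton_eq {Ω α : Type*} [MeasurableSpace Ω]
    {μ : Measure Ω} [IsFiniteMeasure μ] [Fintype α] [MeasurableSpace α]
    [MeasurableSingletonClass α] {X : Ω → α} (hX : Measurable X) {p : ENNReal}
    (hp : ∀ a, μ (X ⁻¹' {a}) = p) (φ : α → ℝ) :
    ∫ ω, φ (X ω) ∂μ = p.toReal * ∑ a, φ a := by
  rw [← integral_map hX.aemeasurable (Measurable.of_discrete).aestronglyMeasurable,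
    integral_fintype Integrable.of_finite, mul_sum]
  simp [measureReal_def, Measure.map_apply hX (measurableSet_singleton _), hp]

theorem balls_into_bins_negatively_associated_general {Ω : Type} [MeasurableSpace Ω]
    (μ : Measure Ω) [IsProbabilityMeasure μ] {n t : ℕ}
    (balls : Fin t → Ω → Fin n)
    (hmeas : ∀ s, Measurable (balls s))
    (hunif : ∀ s i, μ {ω | balls s ω = i} = (n : ENNReal)⁻¹)
    (hindep : iIndepFun balls μ)
    (I J : Finset (Fin n)) (hIJ : Disjoint I J)
    (f g : (Fin n → ℝ) → ℝ)
    (hfI : ∀ v w : Fin n → ℝ, (∀ i ∈ I, v i = w i) → f v = f w)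
    (hgJ : ∀ v w : Fin n → ℝ, (∀ j ∈ J, v j = w j) → g v = g w)
    (hmono : (Monotone f ∧ Monotone g) ∨ (Antitone f ∧ Antitone g)) :
    ∫ ω, f (binCount balls ω) * g (binCount balls ω) ∂μ
      ≤ (∫ ω, f (binCount balls ω) ∂μ) * ∫ ω, g (binCount balls ω) ∂μ := by
  have hlaw (b : Fin t → Fin n) :
      μ ((fun ω s => balls s ω) ⁻¹' {b}) = (n : ENNReal)⁻¹ ^ t := by
    rw [hindep.measure_preimage_singleton_pi]
    exact (prod_congr rfl fun s _ => hunif s (b s)).trans (by simp)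
  have hE (φ : (Fin n → ℝ) → ℝ) :
      ∫ ω, φ (binCount balls ω) ∂μ
        = ((n : ℝ) ^ t)⁻¹ * ∑ b : Fin t → Fin n, φ (countVector b) := by
    have h := integral_comp_of_measure_preimage_singleton_eq (measurable_pi_lambda _ hmeas) hlaw
      fun b => φ (countVector b)
    rwa [ENNReal.toReal_pow, ENNReal.toReal_inv, ENNReal.toReal_natCast, inv_pow] at h
  have key := pow_mul_sum_countVector_mul_le (Finset.disjoint_coe.2 hIJ) t
    (fun v w h => hfI v w h) (fun v w h => hgJ v w h) hmono
  rw [hE fun v => f v * g v, hE f, hE g]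
  set P : ℝ := (n : ℝ) ^ t
  have hP : P⁻¹ * P⁻¹ * P = P⁻¹ := by simpa using mul_self_mul_inv P⁻¹
  calc P⁻¹ * ∑ b : Fin t → Fin n, f (countVector b) * g (countVector b)
      = P⁻¹ * P⁻¹ * (P * ∑ b : Fin t → Fin n, f (countVector b) * g (countVector b)) := by
        rw [← mul_assoc, hP]
    _ ≤ P⁻¹ * P⁻¹ * ((∑ b : Fin t → Fin n, f (countVector b)) *
          ∑ b : Fin t → Fin n, g (countVector b)) := by
        gcongr
    _ = _ := by ring

/-- When `t` balls are thrown independently and uniformly at random into `n`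
bins, the bin counts `B_1, ..., B_n` are negatively associated: for disjoint `I, J` and
functions `f, g` depending only on the coordinates in `I` resp. `J` which are both
(coordinatewise) non-decreasing or both non-increasing, `Cov(f(B), g(B)) ≤ 0`. -/
theorem balls_into_bins_negatively_associated {Ω : Type} [MeasurableSpace Ω]
    (μ : Measure Ω) [IsProbabilityMeasure μ] {n t : ℕ} (hn : 0 < n)
    (balls : Fin t → Ω → Fin n)
    (hmeas : ∀ s, Measurable (balls s))
    (hunif : ∀ s i, μ {ω | balls s ω = i} = (n : ENNReal)⁻¹)
    (hindep : iIndepFun balls μ)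
    (I J : Finset (Fin n)) (hIJ : Disjoint I J)
    (f g : (Fin n → ℝ) → ℝ)
    (hfI : ∀ v w : Fin n → ℝ, (∀ i ∈ I, v i = w i) → f v = f w)
    (hgJ : ∀ v w : Fin n → ℝ, (∀ j ∈ J, v j = w j) → g v = g w)
    (hmono : (Monotone f ∧ Monotone g) ∨ (Antitone f ∧ Antitone g)) :
    ∫ ω, f (binCount balls ω) * g (binCount balls ω) ∂μ
      ≤ (∫ ω, f (binCount balls ω) ∂μ) * ∫ ω, g (binCount balls ω) ∂μ :=
  balls_into_bins_negatively_associated_general μ balls hmeas hunif hindep I J hIJ f g hfI hgJ hmono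
end
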